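/- Fix n, p ∈ ℕ and α ∈ [0, 1/2). Let c be a uniformly random Boolean function from {0,1}^n to {0,1}, let x_1, …, x_p be i.i.d. uniform samples from {0,1}^n independent of c, and let T^c_p = ((x_1, c(x_1)), …, (x_p, c(x_p))). Then for every randomized estimator W, i.e., every map assigning to each element of ({0,1}^n × {0,1})^p a probability distribution over Boolean functions on {0,1}^n, it holds that P( W(T^c_p) ∈ B(c, α) ) ≤ (⌈α·2^n⌉ + 1) · 2^{ 2^n ( H(⌈α·2^n⌉ / 2^n) − 1 ) + p }, where the probability is over c, the samples, and the internal randomness of W. -/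

import Mathlib

open scoped Classical

/-- Binary entropy function `H(t) = -t log₂ t - (1-t) log₂ (1-t)`
(with the convention `H(0) = H(1) = 0`, automatic since `Real.logb 2 0 = 0`). -/
noncomputable def binEntropy2 (t : ℝ) : ℝ :=
  -t * Real.logb 2 t - (1 - t) * Real.logb 2 (1 - t)

/-- The set `B(c, α)` of Boolean functions on `{0,1}^n` differing from `c`
on at most `α·2^n` inputs. -/
noncomputable def ball (n : ℕ) (c : (Fin n → Bool) → Bool) (α : ℝ) :
    Finset ((Fin n → Bool) → Bool) :=
  Finset.univ.filter
    (fun c' => ((Finset.univ.filter (fun x : Fin n → Bool => c' x ≠ c x)).card : ℝ) ≤ α * 2 ^ n)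

/-- The training set `T^c_p = ((x_1, c(x_1)), …, (x_p, c(x_p)))`. -/
def trainSet (n p : ℕ) (c : (Fin n → Bool) → Bool) (x : Fin p → (Fin n → Bool)) :
    Fin p → ((Fin n → Bool) × Bool) :=
  fun i => (x i, c (x i))

/-- The probability, over a uniformly random Boolean function `c` on `{0,1}^n`, over `p`
i.i.d. uniform samples `x_1, …, x_p` from `{0,1}^n`, and over the internal randomness of
the randomized estimator `W`, that `W(T^c_p) ∈ B(c, α)`. -/
noncomputable def probEstimator (n p : ℕ) (α : ℝ)
    (W : (Fin p → ((Fin n → Bool) × Bool)) → PMF ((Fin n → Bool) → Bool)) : ℝ :=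
  (∑ c : (Fin n → Bool) → Bool, ∑ x : Fin p → (Fin n → Bool),
      ∑ c' ∈ ball n c α, ((W (trainSet n p c x)) c').toReal)
    / ((Fintype.card ((Fin n → Bool) → Bool) : ℝ) * (Fintype.card (Fin n → Bool) : ℝ) ^ p)

/-! Fix the sample points `x` and the observed labels `v = c ∘ x`. The estimator's output law
`q = W(x, v)` is then fixed while `c` still ranges over all Boolean functions, and
`∑_c q(B(c, α)) = ∑_{c'} q(c') · |B(c', α)|` because `c' ∈ B(c, α) ↔ c ∈ B(c', α)`. So this sum is
at most the size of a Hamming ball of radius `α 2ⁿ`, which is at most `(k + 1) 2^{2ⁿ H(k / 2ⁿ)}`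
for `k = ⌈α 2ⁿ⌉` by the entropy bound on binomial coefficients. Summing over the `2ᵖ` label
vectors and dividing by the `2^{2ⁿ}` functions `c` gives the bound. -/

open Finset

lemma binEntropy2_one_sub (t : ℝ) : binEntropy2 (1 - t) = binEntropy2 t := by
  rw [binEntropy2, binEntropy2, sub_sub_cancel]
  ring

lemma choose_mul_pow_mul_one_sub_pow_le_one {t : ℝ} (ht0 : 0 ≤ t) (ht1 : t ≤ 1) {N j : ℕ}
    (hj : j ≤ N) : N.choose j * (t ^ j * (1 - t) ^ (N - j)) ≤ 1 := by
  have hsum : ∑ i ∈ range (N + 1), t ^ i * (1 - t) ^ (N - i) * N.choose i = 1 := by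
    rw [← add_pow, add_sub_cancel, one_pow]
  calc (N.choose j : ℝ) * (t ^ j * (1 - t) ^ (N - j))
      = t ^ j * (1 - t) ^ (N - j) * N.choose j := by ring
    _ ≤ ∑ i ∈ range (N + 1), t ^ i * (1 - t) ^ (N - i) * N.choose i :=
        single_le_sum (f := fun i => t ^ i * (1 - t) ^ (N - i) * N.choose i)
          (fun i _ => by have := sub_nonneg.2 ht1; positivity) (mem_range.2 (by omega))
    _ = 1 := hsum

lemma pow_mul_one_sub_pow_le_of_le {t : ℝ} (ht0 : 0 ≤ t) (ht : t ≤ 1 / 2) {N j k : ℕ}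
    (hjk : j ≤ k) (hkN : k ≤ N) : t ^ k * (1 - t) ^ (N - k) ≤ t ^ j * (1 - t) ^ (N - j) := by
  obtain ⟨d, rfl⟩ := Nat.exists_eq_add_of_le hjk
  have hd : t ^ d ≤ (1 - t) ^ d := pow_le_pow_left₀ ht0 (by linarith) d
  calc t ^ (j + d) * (1 - t) ^ (N - (j + d))
      = t ^ j * (t ^ d * (1 - t) ^ (N - (j + d))) := by ring
    _ ≤ t ^ j * ((1 - t) ^ d * (1 - t) ^ (N - (j + d))) := by
        have : 0 ≤ 1 - t := by linarith
        gcongr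
    _ = t ^ j * (1 - t) ^ (N - j) := by
        rw [← pow_add]
        congr 2
        omega

lemma two_rpow_mul_binEntropy2 {N k : ℕ} (hk : k ≤ N) :
    (2 : ℝ) ^ (N * binEntropy2 (k / N)) = ((k / N : ℝ) ^ k * (1 - k / N) ^ (N - k))⁻¹ := by
  rcases Nat.eq_zero_or_pos k with rfl | hk0
  · simp [binEntropy2]
  rcases hk.eq_or_lt with rfl | hkN
  · have : (k : ℝ) ≠ 0 := by positivity
    simp [binEntropy2, this]
  set t : ℝ := k / N
  have hN : (0 : ℝ) < N := by exact_mod_cast hk0.trans hkN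
  have ht0 : 0 < t := by positivity
  have ht1 : 0 < 1 - t := by
    rw [sub_pos, div_lt_one hN]
    exact_mod_cast hkN
  have hNt : (N : ℝ) * t = k := mul_div_cancel₀ _ hN.ne'
  have hNt' : (N : ℝ) * (1 - t) = (N - k : ℕ) := by
    rw [Nat.cast_sub hk, mul_sub, mul_one, hNt]
  have hexp : (N : ℝ) * binEntropy2 t
      = -(Real.logb 2 t * k) - Real.logb 2 (1 - t) * (N - k : ℕ) := by
    rw [binEntropy2, ← hNt, ← hNt']
    ring
  rw [hexp, Real.rpow_sub two_pos, Real.rpow_neg zero_le_two, Real.rpow_mul zero_le_two,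
    Real.rpow_mul zero_le_two, Real.rpow_logb two_pos (by norm_num) ht0,
    Real.rpow_logb two_pos (by norm_num) ht1, Real.rpow_natCast, Real.rpow_natCast,
    mul_inv, div_eq_mul_inv]

lemma choose_le_two_rpow_of_two_mul_le {N j k : ℕ} (hjk : j ≤ k) (hkN : 2 * k ≤ N) :
    (N.choose j : ℝ) ≤ 2 ^ (N * binEntropy2 (k / N)) := by
  rcases Nat.eq_zero_or_pos N with rfl | hN
  · obtain rfl : j = 0 := by omega
    simp [binEntropy2]
  have hkN' : k ≤ N := by omega
  have hjN : j ≤ N := by omega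
  set t : ℝ := k / N
  have hNR : (0 : ℝ) < N := by exact_mod_cast hN
  have ht0 : 0 ≤ t := by positivity
  have ht : t ≤ 1 / 2 := by
    rw [div_le_iff₀ hNR]
    have : (2 * k : ℝ) ≤ N := by exact_mod_cast hkN
    linarith
  have hpos : 0 < t ^ k * (1 - t) ^ (N - k) := by
    rcases Nat.eq_zero_or_pos k with rfl | hk
    · simp [t]
    have : 0 < 1 - t := by linarith
    positivity
  rw [two_rpow_mul_binEntropy2 hkN', ← one_div, le_div_iff₀ hpos]
  calc (N.choose j : ℝ) * (t ^ k * (1 - t) ^ (N - k))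
      ≤ N.choose j * (t ^ j * (1 - t) ^ (N - j)) :=
        mul_le_mul_of_nonneg_left (pow_mul_one_sub_pow_le_of_le ht0 ht hjk hkN') (by positivity)
    _ ≤ 1 := choose_mul_pow_mul_one_sub_pow_le_one ht0 (by linarith) hjN

lemma choose_le_two_rpow {N j k : ℕ} (hjk : j ≤ k) (hjkN : j + k ≤ N) :
    (N.choose j : ℝ) ≤ 2 ^ (N * binEntropy2 (k / N)) := by
  rcases le_or_gt (2 * k) N with hkN | hkN
  · exact choose_le_two_rpow_of_two_mul_le hjk hkN
  have hN : (N : ℝ) ≠ 0 := by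
    have : 0 < N := by omega
    positivity
  have hsymm : binEntropy2 ((N - k : ℕ) / N) = binEntropy2 (k / N) := by
    rw [Nat.cast_sub (by omega), sub_div, div_self hN, binEntropy2_one_sub]
  rw [← hsymm]
  exact choose_le_two_rpow_of_two_mul_le (by omega) (by omega)

lemma sum_range_choose_le {N m k : ℕ} (hmk : m ≤ k) (hmkN : m + k ≤ N) :
    ∑ j ∈ range (m + 1), (N.choose j : ℝ) ≤ (k + 1) * 2 ^ (N * binEntropy2 (k / N)) :=
  calc ∑ j ∈ range (m + 1), (N.choose j : ℝ)
      ≤ ∑ _j ∈ range (m + 1), (2 : ℝ) ^ (N * binEntropy2 (k / N)) :=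
        sum_le_sum fun j hj => by
          have := mem_range.1 hj
          exact choose_le_two_rpow (by omega) (by omega)
    _ ≤ (k + 1) * 2 ^ (N * binEntropy2 (k / N)) := by
        rw [sum_const, card_range, nsmul_eq_mul, Nat.cast_succ]
        gcongr

lemma card_hammingDist_le {ι : Type*} [Fintype ι] [DecidableEq ι] (x : ι → Bool) (m : ℕ) :
    #{y : ι → Bool | hammingDist y x ≤ m} ≤ ∑ j ∈ range (m + 1), (Fintype.card ι).choose j := by
  let diff : (ι → Bool) → Finset ι := fun y => {i | y i ≠ x i}
  have hinj : Set.InjOn diff ({y | hammingDist y x ≤ m} : Finset (ι → Bool)) := by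
    intro y₁ _ y₂ _ h
    funext i
    have hi : y₁ i ≠ x i ↔ y₂ i ≠ x i := by
      simpa [diff] using congrArg (i ∈ ·) h
    revert hi
    cases y₁ i <;> cases y₂ i <;> cases x i <;> simp
  calc #{y : ι → Bool | hammingDist y x ≤ m}
      ≤ #((range (m + 1)).biUnion fun j => powersetCard j (univ : Finset ι)) := by
        refine card_le_card_of_injOn diff (fun y hy => ?_) hinj
        simp only [coe_filter, mem_univ, true_and] at hy
        exact mem_biUnion.2 ⟨#(diff y), mem_range.2 (Nat.lt_succ_of_le hy),
          mem_powersetCard.2 ⟨subset_univ _, rfl⟩⟩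
    _ ≤ ∑ j ∈ range (m + 1), #(powersetCard j (univ : Finset ι)) := card_biUnion_le
    _ = ∑ j ∈ range (m + 1), (Fintype.card ι).choose j := by
        simp only [card_powersetCard, card_univ]

lemma mem_ball_iff_hammingDist {n : ℕ} {c c' : (Fin n → Bool) → Bool} {α : ℝ} :
    c' ∈ ball n c α ↔ (hammingDist c' c : ℝ) ≤ α * 2 ^ n := by
  simp only [ball, mem_filter, mem_univ, true_and, hammingDist]

lemma mem_ball_comm {n : ℕ} {c c' : (Fin n → Bool) → Bool} {α : ℝ} :
    c' ∈ ball n c α ↔ c ∈ ball n c' α := by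
  rw [mem_ball_iff_hammingDist, mem_ball_iff_hammingDist, hammingDist_comm]

lemma floor_add_ceil_le {R : Type*} [Field R] [LinearOrder R] [IsStrictOrderedRing R]
    [FloorSemiring R] {a : R} {N : ℕ} (ha0 : 0 ≤ a) (ha : a < N / 2) : ⌊a⌋₊ + ⌈a⌉₊ ≤ N := by
  have h : ((⌊a⌋₊ + ⌈a⌉₊ : ℕ) : R) < N + 1 := by
    push_cast
    linarith [Nat.floor_le ha0, Nat.ceil_lt_add_one ha0]
  exact_mod_cast Nat.lt_succ_iff.1 (by exact_mod_cast h)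

noncomputable def ballCardBound (n : ℕ) (α : ℝ) : ℝ :=
  (⌈α * 2 ^ n⌉₊ + 1) * 2 ^ (2 ^ n * binEntropy2 (⌈α * 2 ^ n⌉₊ / 2 ^ n))

lemma card_ball_le {n : ℕ} {α : ℝ} (hα0 : 0 ≤ α) (hα1 : α < 1 / 2) (c : (Fin n → Bool) → Bool) :
    (#(ball n c α) : ℝ) ≤ ballCardBound n α := by
  have hN : Fintype.card (Fin n → Bool) = 2 ^ n := by simp
  have hsub : ball n c α ⊆ ({c' | hammingDist c' c ≤ ⌊α * 2 ^ n⌋₊} : Finset _) := fun c' hc' => by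
    rw [mem_filter]
    exact ⟨mem_univ _, Nat.le_floor (mem_ball_iff_hammingDist.1 hc')⟩
  have hmk : ⌊α * 2 ^ n⌋₊ + ⌈α * 2 ^ n⌉₊ ≤ 2 ^ n :=
    floor_add_ceil_le (by positivity) (by push_cast; nlinarith [pow_pos (two_pos (α := ℝ)) n])
  calc (#(ball n c α) : ℝ)
      ≤ ∑ j ∈ range (⌊α * 2 ^ n⌋₊ + 1), ((2 ^ n).choose j : ℝ) := by
        rw [← hN]
        exact_mod_cast (card_le_card hsub).trans (card_hammingDist_le c _)
    _ ≤ ballCardBound n α := by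
        have := sum_range_choose_le (Nat.floor_le_ceil _) hmk
        push_cast at this
        exact this

lemma PMF.sum_toReal_eq_one {β : Type*} [Fintype β] (q : PMF β) : ∑ b, (q b).toReal = 1 := by
  have h := q.tsum_coe
  rw [tsum_fintype] at h
  rw [← ENNReal.toReal_sum fun b _ => q.apply_ne_top b, h, ENNReal.toReal_one]

lemma sum_sum_pmf_le_of_card_le {β : Type*} [Fintype β] (B : β → Finset β)
    (hB : ∀ a b, b ∈ B a ↔ a ∈ B b) {K : ℝ} (hK : ∀ a, (#(B a) : ℝ) ≤ K) (q : PMF β) :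
    ∑ a, ∑ b ∈ B a, (q b).toReal ≤ K :=
  calc ∑ a, ∑ b ∈ B a, (q b).toReal
      = ∑ b, ∑ _a ∈ B b, (q b).toReal :=
        sum_comm' fun a b => by simp only [mem_univ, true_and, and_true, hB]
    _ ≤ ∑ b, K * (q b).toReal := by
        refine sum_le_sum fun b _ => ?_
        rw [sum_const, nsmul_eq_mul]
        exact mul_le_mul_of_nonneg_right (hK b) ENNReal.toReal_nonneg
    _ = K := by rw [← mul_sum, q.sum_toReal_eq_one, mul_one]

lemma sum_comp_le_sum_sum {β γ : Type*} [Fintype β] [Fintype γ] (F : γ → β → ℝ)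
    (hF : ∀ v b, 0 ≤ F v b) (φ : β → γ) : ∑ b, F (φ b) b ≤ ∑ v, ∑ b, F v b := by
  rw [sum_comm]
  exact sum_le_sum fun b _ =>
    single_le_sum (f := fun v => F v b) (fun v _ => hF v b) (mem_univ (φ b))

lemma sum_ball_trainSet_le {n p : ℕ} {α : ℝ} (hα0 : 0 ≤ α) (hα1 : α < 1 / 2)
    (W : (Fin p → ((Fin n → Bool) × Bool)) → PMF ((Fin n → Bool) → Bool))
    (x : Fin p → (Fin n → Bool)) :
    ∑ c, ∑ c' ∈ ball n c α, (W (trainSet n p c x) c').toReal ≤ 2 ^ p * ballCardBound n α :=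
  calc ∑ c, ∑ c' ∈ ball n c α, (W (trainSet n p c x) c').toReal
      ≤ ∑ v : Fin p → Bool, ∑ c, ∑ c' ∈ ball n c α, (W (fun i => (x i, v i)) c').toReal :=
        (sum_comp_le_sum_sum
          (fun v c => ∑ c' ∈ ball n c α, (W (fun i => (x i, v i)) c').toReal)
          (fun _ _ => sum_nonneg fun _ _ => ENNReal.toReal_nonneg) fun c i => c (x i) :)
    _ ≤ ∑ _v : Fin p → Bool, ballCardBound n α :=
        sum_le_sum fun v _ => sum_sum_pmf_le_of_card_le _ (fun _ _ => mem_ball_comm)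
          (card_ball_le hα0 hα1) _
    _ = 2 ^ p * ballCardBound n α := by
        rw [sum_const, card_univ, nsmul_eq_mul]
        simp

lemma probEstimator_le {n p : ℕ} {α : ℝ} (hα0 : 0 ≤ α) (hα1 : α < 1 / 2)
    (W : (Fin p → ((Fin n → Bool) × Bool)) → PMF ((Fin n → Bool) → Bool)) :
    probEstimator n p α W ≤ 2 ^ p * ballCardBound n α / 2 ^ 2 ^ n := by
  have hsum : ∑ c, ∑ x : Fin p → (Fin n → Bool), ∑ c' ∈ ball n c α,
      (W (trainSet n p c x) c').toReal ≤ (2 ^ n) ^ p * (2 ^ p * ballCardBound n α) := by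
    rw [sum_comm]
    calc _ ≤ ∑ _x : Fin p → (Fin n → Bool), 2 ^ p * ballCardBound n α :=
          sum_le_sum fun x _ => sum_ball_trainSet_le hα0 hα1 W x
      _ = _ := by simp
  have hcard : (Fintype.card ((Fin n → Bool) → Bool) : ℝ) * Fintype.card (Fin n → Bool) ^ p
      = 2 ^ 2 ^ n * (2 ^ n) ^ p := by simp
  calc probEstimator n p α W
      ≤ (2 ^ n) ^ p * (2 ^ p * ballCardBound n α) / (2 ^ 2 ^ n * (2 ^ n) ^ p) := by
        rw [probEstimator, hcard]
        gcongr
    _ = 2 ^ p * ballCardBound n α / 2 ^ 2 ^ n := by field_simp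

/-- For `α ∈ [0, 1/2)` and every randomized estimator `W`,
`P(W(T^c_p) ∈ B(c, α)) ≤ (⌈α·2^n⌉ + 1) · 2^{2^n (H(⌈α·2^n⌉/2^n) - 1) + p}`. -/
theorem stmt7 (n p : ℕ) (α : ℝ) (hα0 : 0 ≤ α) (hα1 : α < 1 / 2)
    (W : (Fin p → ((Fin n → Bool) × Bool)) → PMF ((Fin n → Bool) → Bool)) :
    probEstimator n p α W ≤
      ((⌈α * 2 ^ n⌉₊ : ℝ) + 1) *
        (2 : ℝ) ^ ((2 : ℝ) ^ n *
          (binEntropy2 ((⌈α * 2 ^ n⌉₊ : ℝ) / (2 : ℝ) ^ n) - 1) + (p : ℝ)) := by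
  refine (probEstimator_le hα0 hα1 W).trans_eq ?_
  rw [ballCardBound, mul_sub, mul_one, sub_add_eq_add_sub, Real.rpow_sub two_pos,
    Real.rpow_add two_pos, Real.rpow_natCast, ← Real.rpow_natCast 2 (2 ^ n)]
  push_cast
  ring
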